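/- arXiv:2301.12014 — 2 statements merged into one kernel-verified Lean document; each statement's English description precedes it below -/
import Mathlib

section
/- Let G be a non-archimedean CLI Polish group, N a closed normal subgroup of G, and α < ω₁. If G is α-CLI then the quotient group G/N is α-CLI, and if G is L-α-CLI then G/N is L-α-CLI. In particular, rank(G/N) ≤ rank(G). -/
noncomputable section

/-- `omegaPart a` is ω(a): the largest limit ordinal `≤ a`, or `0` if there is none. -/
def omegaPart (a : Ordinal) : Ordinal :=
  sSup {b : Ordinal | (b = 0 ∨ Order.IsSuccLimit b) ∧ b ≤ a}

/-- `IsTree lt` says that the binary relation `lt` on `T` is a tree order: it is irreflexive,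
transitive, and the set of predecessors of any node is finite and linearly ordered. -/
def IsTree {T : Type*} (lt : T → T → Prop) : Prop :=
  (∀ s, ¬ lt s s) ∧
  (∀ s t u, lt s t → lt t u → lt s u) ∧
  (∀ s, {t | lt t s}.Finite) ∧
  (∀ s t u, lt t s → lt u s → t = u ∨ lt t u ∨ lt u t)

/-- The length `lh s` of a node of a tree: the number of its strict predecessors. -/
def lh {T : Type*} (lt : T → T → Prop) (s : T) : ℕ :=
  Nat.card {t | lt t s}

/-- The rank `ρ(T)` of a tree `(T, lt)`: for a well-founded tree it is
`sup { ρ_T(s) + 1 : s ∈ T }` where `ρ_T(s) = sup { ρ_T(t) + 1 : s < t }`;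
for an ill-founded tree we use the junk value `0`. -/
def rhoRel {T : Type u} (lt : T → T → Prop) : Ordinal.{u} :=
  letI := Classical.dec (WellFounded (Function.swap lt))
  if h : WellFounded (Function.swap lt) then ⨆ s : T, Order.succ ((h.apply s).rank) else 0

/-- The nodes of the tree `T_ℰ^X` associated to a sequence `E` of (equivalence) relations
on `X`: pairs `(n, C)` where `C` is a non-singleton class `[x]_{E n}`. -/
def TreeNode (X : Type u) (E : ℕ → X → X → Prop) : Type u :=
  {p : ℕ × Set X // ∃ x : X, p.2 = {y | E p.1 x y} ∧ p.2 ≠ {x}}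

/-- The tree order on `T_ℰ^X`: `(n, C) < (m, D)` iff `n < m` and `C ⊇ D`. -/
def nodeLT {X : Type u} (E : ℕ → X → X → Prop) :
    TreeNode X E → TreeNode X E → Prop :=
  fun s t => s.1.1 < t.1.1 ∧ t.1.2 ⊆ s.1.2

/-- The tree `T_ℰ^X` is well-founded: no infinite strictly increasing sequence. -/
def TreeWF (X : Type u) (E : ℕ → X → X → Prop) : Prop :=
  WellFounded (Function.swap (nodeLT E))

/-- The rank `ρ(T_ℰ^X)`. -/
def treeRho (X : Type u) (E : ℕ → X → X → Prop) : Ordinal.{u} :=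
  rhoRel (nodeLT E)

/-- A Polish group: a topological group whose topology is Polish. -/
def IsPolishGroup (G : Type u) [Group G] [TopologicalSpace G] : Prop :=
  IsTopologicalGroup G ∧ PolishSpace G

/-- A topological group is non-archimedean if the open subgroups form a
neighborhood base of the identity. -/
def IsNonArch (G : Type u) [Group G] [TopologicalSpace G] : Prop :=
  ∀ U ∈ nhds (1 : G), ∃ H : Subgroup G, IsOpen (H : Set G) ∧ (H : Set G) ⊆ U

/-- A topological group is CLI if it admits a compatible complete left-invariant metric. -/
def IsCLI (G : Type u) [Group G] [TopologicalSpace G] : Prop :=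
  ∃ m : MetricSpace G,
    m.toUniformSpace.toTopologicalSpace = ‹TopologicalSpace G› ∧
    @CompleteSpace G m.toUniformSpace ∧
    ∀ g h k : G, m.dist (g * h) (g * k) = m.dist h k

/-- A topological group is TSI if it admits a compatible complete two-sided-invariant metric. -/
def IsTSI (G : Type u) [Group G] [TopologicalSpace G] : Prop :=
  ∃ m : MetricSpace G,
    m.toUniformSpace.toTopologicalSpace = ‹TopologicalSpace G› ∧
    @CompleteSpace G m.toUniformSpace ∧
    ∀ g h k : G, m.dist (g * h) (g * k) = m.dist h k ∧ m.dist (h * g) (k * g) = m.dist h k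

/-- `Dgnb G` is the set `dgnb(G)`: decreasing sequences `(G_n)` of open subgroups of `G`
with `G_0 = G` forming a neighborhood base of `1_G`. -/
structure Dgnb (G : Type u) [Group G] [TopologicalSpace G] where
  seq : ℕ → Subgroup G
  isOpen : ∀ n, IsOpen ((seq n : Set G))
  antitone : ∀ n, seq (n + 1) ≤ seq n
  zero_eq_top : seq 0 = ⊤
  basis : ∀ U ∈ nhds (1 : G), ∃ n, ((seq n : Set G)) ⊆ U

/-- The orbit equivalence relation of (the action of) a subgroup `H ≤ G` on a `G`-space `X`:
`x ∼ y` iff `g • x = y` for some `g ∈ H`. -/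
def subOrbit {G : Type u} [Group G] (H : Subgroup G) (X : Type v) [MulAction G X] :
    X → X → Prop :=
  fun x y => ∃ g ∈ H, g • x = y

/-- The tree `T_𝒢^X` of a `𝒢 ∈ dgnb(G)` and a `G`-space `X`: nodes are pairs `(n, C)`
with `C` a non-singleton `G_n`-orbit. We record it by its defining sequence of relations. -/
def dgnbRel {G : Type u} [Group G] [TopologicalSpace G] (𝒢 : Dgnb G) (X : Type v)
    [MulAction G X] : ℕ → X → X → Prop :=
  fun n => subOrbit (𝒢.seq n) X

/-- `ρ^k(𝒢) = ρ(T_𝒢^{G/G_k})`, where `G` acts by left translation on `G/G_k`. -/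
def rhoK {G : Type u} [Group G] [TopologicalSpace G] (𝒢 : Dgnb G) (k : ℕ) : Ordinal.{u} :=
  treeRho (G ⧸ 𝒢.seq k) (dgnbRel 𝒢 (G ⧸ 𝒢.seq k))

/-- `ρ(𝒢) = ρ(T_𝒢^{X(𝒢)})` where `X(𝒢) = ⊔_k G/G_k` is the disjoint union of the coset
spaces, with `G` acting by left translation on each summand. -/
def rhoDgnb {G : Type u} [Group G] [TopologicalSpace G] (𝒢 : Dgnb G) : Ordinal.{u} :=
  treeRho (Σ k : ℕ, G ⧸ 𝒢.seq k)
    (fun n p q => ∃ g ∈ 𝒢.seq n, q = ⟨p.1, g • p.2⟩)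

/-- `G` is α-CLI if `ρ(𝒢) ≤ ω·α` for any (equivalently, some) `𝒢 ∈ dgnb(G)`. -/
def IsAlphaCLI (G : Type u) [Group G] [TopologicalSpace G] (α : Ordinal.{u}) : Prop :=
  ∀ 𝒢 : Dgnb G, rhoDgnb 𝒢 ≤ Ordinal.omega0 * α

/-- `G` is L-α-CLI if `rank(G) ≤ α`, i.e. `ω(ρ(𝒢)) ≤ ω·α` for any (equivalently, some)
`𝒢 ∈ dgnb(G)`. -/
def IsLAlphaCLI (G : Type u) [Group G] [TopologicalSpace G] (α : Ordinal.{u}) : Prop :=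
  ∀ 𝒢 : Dgnb G, omegaPart (rhoDgnb 𝒢) ≤ Ordinal.omega0 * α



/-!
Tree ranks can only drop along a *simulation*, a matching of nodes under which every edge of
the simulated tree lifts. Maps of `G`-spaces sending orbits onto orbits give simulations, both
when they are onto and when they are injective on orbits. For the quotient map `π : G → G/N`,
choose `j` with `π(G_{j k}) ⊆ Q_k`; then `⊔_k G/G_{j k}` embeds into `X(𝒢)` and maps onto
`X(𝒬) = ⊔_k (G/N)/Q_k`, so the tree of `π(G_n)`-orbits on `X(𝒬)` is well-founded of rank at most
`ρ(𝒢)`. Here `T_𝒢^{X(𝒢)}` is well-founded because `G` is CLI: along an infinite branch the points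
are moved by partial products that converge for a complete left-invariant metric, so they
eventually stop moving.

It remains to replace `(π(G_n))` by `(Q_n)`. Send a `Q`-node to the `π(G)`-node of largest level
`b` containing it. Along a branch this image either stays, for fewer than `m` steps where
`Q_m ⊆ π(G_{b+1})`, or climbs, and then its rank drops by at least the number of levels climbed.
So a node whose image has rank below `ω·β + j` has rank below `ω·β + ω`, which gives both
`ρ(𝒬) ≤ ω·α` and `ω(ρ(𝒬)) ≤ ω(ρ(𝒢))`.
-/

universe u v

open Ordinal Order Set Filter Topology

section Trees

variable {X Y Z : Type u} {E : ℕ → X → X → Prop} {F : ℕ → Y → Y → Prop}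

structure IsAntitoneEquiv (E : ℕ → X → X → Prop) : Prop where
  equivalence : ∀ n, Equivalence (E n)
  antitone : Antitone E

def classOf (E : ℕ → X → X → Prop) (n : ℕ) (x : X) : Set X := {y | E n x y}

theorem IsAntitoneEquiv.mem_classOf_self (hE : IsAntitoneEquiv E) (n : ℕ) (x : X) :
    x ∈ classOf E n x :=
  (hE.equivalence n).refl x

theorem IsAntitoneEquiv.classOf_eq (hE : IsAntitoneEquiv E) {n : ℕ} {x y : X}
    (h : y ∈ classOf E n x) : classOf E n y = classOf E n x := by
  ext z
  exact ⟨(hE.equivalence n).trans h, (hE.equivalence n).trans ((hE.equivalence n).symm h)⟩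

theorem IsAntitoneEquiv.classOf_subset (hE : IsAntitoneEquiv E) {m n : ℕ} (hmn : m ≤ n)
    (x : X) : classOf E n x ⊆ classOf E m x :=
  fun y => hE.antitone hmn x y

def TreeNode.ofClass (n : ℕ) (x : X) (h : (classOf E n x).Nontrivial) : TreeNode X E :=
  ⟨(n, classOf E n x), x, rfl, h.ne_singleton⟩

theorem TreeNode.nontrivial (hE : IsAntitoneEquiv E) (s : TreeNode X E) :
    s.1.2.Nontrivial := by
  obtain ⟨x, hx, hne⟩ := s.2
  have hxs : x ∈ s.1.2 := hx ▸ hE.mem_classOf_self _ x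
  exact (nontrivial_iff_ne_singleton hxs).2 hne

theorem TreeNode.set_eq_classOf (hE : IsAntitoneEquiv E) (s : TreeNode X E) {x : X}
    (hx : x ∈ s.1.2) : s.1.2 = classOf E s.1.1 x := by
  obtain ⟨w, hw, -⟩ := s.2
  rw [hw] at hx ⊢
  exact (hE.classOf_eq hx).symm

theorem nodeLT_trans {s t u : TreeNode X E} (hst : nodeLT E s t) (htu : nodeLT E t u) :
    nodeLT E s u :=
  ⟨hst.1.trans htu.1, htu.2.trans hst.2⟩

def TreeWF.rank (hwf : TreeWF X E) (s : TreeNode X E) : Ordinal.{u} :=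
  (WellFounded.apply hwf s).rank

theorem TreeWF.rank_lt (hwf : TreeWF X E) {s t : TreeNode X E} (h : nodeLT E s t) :
    hwf.rank t < hwf.rank s :=
  Acc.rank_lt_of_rel (WellFounded.apply hwf s) h

theorem TreeWF.rank_le_iff (hwf : TreeWF X E) {s : TreeNode X E} {c : Ordinal} :
    hwf.rank s ≤ c ↔ ∀ t, nodeLT E s t → hwf.rank t < c := by
  rw [TreeWF.rank, Acc.rank_eq, Ordinal.iSup_le_iff, Subtype.forall]
  simp only [succ_le_iff]
  rfl

theorem treeRho_le_iff (hwf : TreeWF X E) {c : Ordinal} :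
    treeRho X E ≤ c ↔ ∀ s, hwf.rank s < c := by
  rw [treeRho, rhoRel, dif_pos (show WellFounded (Function.swap (nodeLT E)) from hwf),
    Ordinal.iSup_le_iff]
  simp only [succ_le_iff]
  rfl

theorem TreeWF.rank_lt_treeRho (hwf : TreeWF X E) (s : TreeNode X E) :
    hwf.rank s < treeRho X E :=
  (treeRho_le_iff hwf).1 le_rfl s

def TreeSimulates (F : ℕ → Y → Y → Prop) (E : ℕ → X → X → Prop) : Prop :=
  ∃ R : TreeNode Y F → TreeNode X E → Prop, (∀ d, ∃ s, R s d) ∧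
    ∀ s d d', R s d → nodeLT E d d' → ∃ s', nodeLT F s s' ∧ R s' d'

theorem TreeSimulates.trans {D : ℕ → Z → Z → Prop} (hFE : TreeSimulates F E)
    (hDF : TreeSimulates D F) : TreeSimulates D E := by
  obtain ⟨R, hR, hRlift⟩ := hFE
  obtain ⟨R', hR', hR'lift⟩ := hDF
  refine ⟨fun u d => ∃ s, R' u s ∧ R s d, fun d => ?_, ?_⟩
  · obtain ⟨s, hs⟩ := hR d
    obtain ⟨u, hu⟩ := hR' s
    exact ⟨u, s, hu, hs⟩
  · rintro u d d' ⟨s, hus, hsd⟩ hdd'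
    obtain ⟨s', hss', hs'd'⟩ := hRlift s d d' hsd hdd'
    obtain ⟨u', huu', hu's'⟩ := hR'lift u s s' hus hss'
    exact ⟨u', huu', s', hu's', hs'd'⟩

theorem TreeSimulates.treeWF (h : TreeSimulates F E) (hwf : TreeWF Y F) : TreeWF X E := by
  obtain ⟨R, hR, hlift⟩ := h
  have hacc : ∀ s d, R s d → Acc (Function.swap (nodeLT E)) d := by
    intro s
    induction s using hwf.induction with
    | _ s ih =>
      intro d hsd
      refine .intro d fun d' hdd' => ?_
      obtain ⟨s', hss', hs'd'⟩ := hlift s d d' hsd hdd'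
      exact ih s' hss' d' hs'd'
  exact ⟨fun d => (hR d).elim fun s hsd => hacc s d hsd⟩

theorem TreeSimulates.treeRho_le (h : TreeSimulates F E) (hwf : TreeWF Y F) :
    treeRho X E ≤ treeRho Y F := by
  have hwfX := h.treeWF hwf
  obtain ⟨R, hR, hlift⟩ := h
  have hrank : ∀ s d, R s d → hwfX.rank d ≤ hwf.rank s := by
    intro s
    induction s using hwf.induction with
    | _ s ih =>
      intro d hsd
      refine hwfX.rank_le_iff.2 fun d' hdd' => ?_
      obtain ⟨s', hss', hs'd'⟩ := hlift s d d' hsd hdd'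
      exact (ih s' hss' d' hs'd').trans_lt (hwf.rank_lt hss')
  refine (treeRho_le_iff hwfX).2 fun d => ?_
  obtain ⟨s, hsd⟩ := hR d
  exact (hrank s d hsd).trans_lt (hwf.rank_lt_treeRho s)

def PreservesClasses (f : Y → X) (F : ℕ → Y → Y → Prop) (E : ℕ → X → X → Prop) :
    Prop :=
  ∀ n y, f '' classOf F n y = classOf E n (f y)

theorem treeSimulates_of_surjective (hE : IsAntitoneEquiv E) (hF : IsAntitoneEquiv F)
    {f : Y → X} (hf : PreservesClasses f F E) (hsurj : Function.Surjective f) :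
    TreeSimulates F E := by
  have hnode : ∀ (d : TreeNode X E) {y}, f y ∈ d.1.2 →
      ∃ s : TreeNode Y F, s.1.1 = d.1.1 ∧ s.1.2 = classOf F d.1.1 y ∧ f '' s.1.2 = d.1.2 := by
    intro d y hy
    have himage : f '' classOf F d.1.1 y = d.1.2 := by rw [hf, d.set_eq_classOf hE hy]
    have hnt := nontrivial_of_image f _ (himage ▸ d.nontrivial hE)
    exact ⟨.ofClass _ y hnt, rfl, rfl, himage⟩
  refine ⟨fun s d => s.1.1 = d.1.1 ∧ f '' s.1.2 = d.1.2, fun d => ?_, ?_⟩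
  · obtain ⟨x, hx⟩ := (d.nontrivial hE).nonempty
    obtain ⟨y, rfl⟩ := hsurj x
    obtain ⟨s, hs, -, himage⟩ := hnode d hx
    exact ⟨s, hs, himage⟩
  · rintro s d d' ⟨hlevel, himage⟩ hdd'
    obtain ⟨x, hx⟩ := (d'.nontrivial hE).nonempty
    obtain ⟨y, hys, rfl⟩ : x ∈ f '' s.1.2 := himage ▸ hdd'.2 hx
    obtain ⟨s', hlevel', hs', himage'⟩ := hnode d' hx
    have hlt : s.1.1 < s'.1.1 := hlevel ▸ hlevel' ▸ hdd'.1
    refine ⟨s', ⟨hlt, ?_⟩, hlevel', himage'⟩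
    rw [hs', s.set_eq_classOf hF hys, ← hlevel']
    exact hF.classOf_subset hlt.le y

theorem treeSimulates_of_injOn (hE : IsAntitoneEquiv E) {f : X → Y}
    (hf : PreservesClasses f E F) (hinj : ∀ n x, (classOf E n x).InjOn f) :
    TreeSimulates F E := by
  have hnode : ∀ d : TreeNode X E, ∃ s : TreeNode Y F, s.1.1 = d.1.1 ∧ s.1.2 = f '' d.1.2 := by
    intro d
    obtain ⟨x, hx⟩ := (d.nontrivial hE).nonempty
    have himage : f '' d.1.2 = classOf F d.1.1 (f x) := by rw [d.set_eq_classOf hE hx, hf]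
    have hnt : (classOf F d.1.1 (f x)).Nontrivial :=
      himage ▸ (d.nontrivial hE).image_of_injOn (d.set_eq_classOf hE hx ▸ hinj _ _)
    exact ⟨.ofClass _ (f x) hnt, rfl, himage.symm⟩
  refine ⟨fun s d => s.1.1 = d.1.1 ∧ s.1.2 = f '' d.1.2, hnode, ?_⟩
  rintro s d d' ⟨hlevel, himage⟩ hdd'
  obtain ⟨s', hlevel', himage'⟩ := hnode d'
  refine ⟨s', ⟨hlevel ▸ hlevel' ▸ hdd'.1, ?_⟩, hlevel', himage'⟩
  rw [himage, himage']
  exact image_mono hdd'.2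

end Trees

section Geometry

variable {X : Type u} {E : ℕ → X → X → Prop}

theorem TreeNode.exists_ancestor (hE : IsAntitoneEquiv E) (t : TreeNode X E) {m : ℕ}
    (hm : m < t.1.1) : ∃ u : TreeNode X E, u.1.1 = m ∧ nodeLT E u t ∧
      ∀ s, nodeLT E s t → s.1.1 < m → nodeLT E s u := by
  obtain ⟨x, hx⟩ := (t.nontrivial hE).nonempty
  have ht : t.1.2 ⊆ classOf E m x := t.set_eq_classOf hE hx ▸ hE.classOf_subset hm.le x
  refine ⟨.ofClass m x ((t.nontrivial hE).mono ht), rfl, ⟨hm, ht⟩,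
    fun s hst hsm => ⟨hsm, ?_⟩⟩
  rw [s.set_eq_classOf hE (hst.2 hx)]
  exact hE.classOf_subset hsm.le x

theorem TreeWF.rank_add_le_of_nodeLT (hE : IsAntitoneEquiv E) (hwf : TreeWF X E)
    {s t : TreeNode X E} (h : nodeLT E s t) :
    hwf.rank t + (t.1.1 - s.1.1 : ℕ) ≤ hwf.rank s := by
  obtain ⟨d, hd⟩ : ∃ d, t.1.1 = s.1.1 + d + 1 :=
    ⟨t.1.1 - s.1.1 - 1, by have := h.1; omega⟩
  rw [show t.1.1 - s.1.1 = d + 1 by omega]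
  induction d generalizing t with
  | zero => simpa using Order.add_one_le_iff.2 (hwf.rank_lt h)
  | succ d ih =>
    obtain ⟨u, hu, hut, hsu⟩ := t.exists_ancestor hE (m := s.1.1 + d + 1) (by omega)
    calc hwf.rank t + ((d + 1 + 1 : ℕ) : Ordinal)
        = hwf.rank t + 1 + ((d + 1 : ℕ) : Ordinal) := by
          rw [show d + 1 + 1 = 1 + (d + 1) by omega, Nat.cast_add, Nat.cast_one, add_assoc]
      _ ≤ hwf.rank u + ((d + 1 : ℕ) : Ordinal) := by
          gcongr; exact Order.add_one_le_iff.2 (hwf.rank_lt hut)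
      _ ≤ hwf.rank s := ih (hsu s h (by omega)) hu

theorem TreeWF.rank_add_level_lt_treeRho (hE : IsAntitoneEquiv E) (hwf : TreeWF X E)
    (s : TreeNode X E) : hwf.rank s + s.1.1 < treeRho X E := by
  rcases Nat.eq_zero_or_pos s.1.1 with h0 | hpos
  · simpa [h0] using hwf.rank_lt_treeRho s
  · obtain ⟨u, hu, hus, -⟩ := s.exists_ancestor hE hpos
    have := hwf.rank_add_le_of_nodeLT hE hus
    rw [hu, Nat.sub_zero] at this
    exact this.trans_lt (hwf.rank_lt_treeRho u)

theorem TreeWF.rank_le_add_of_forall_le_level (hwf : TreeWF X E) {l : Ordinal} {K : ℕ}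
    (s : TreeNode X E) (h : ∀ t, nodeLT E s t → K ≤ t.1.1 → hwf.rank t < l) :
    hwf.rank s ≤ l + (K - s.1.1 : ℕ) := by
  induction s using hwf.induction with
  | _ s ih =>
    refine hwf.rank_le_iff.2 fun t hst => ?_
    by_cases hK : K ≤ t.1.1
    · exact (h t hst hK).trans_le le_self_add
    · have := hst.1
      calc hwf.rank t < l + (K - t.1.1 : ℕ) + 1 :=
            Order.lt_add_one_iff.2 (ih t hst fun u htu => h u (nodeLT_trans hst htu))
        _ = l + ((K - t.1.1 + 1 : ℕ) : Ordinal) := by push_cast; rw [add_assoc]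
        _ ≤ l + (K - s.1.1 : ℕ) := by gcongr; omega

end Geometry

theorem Ordinal.exists_eq_omega0_mul_div_add_natCast (a : Ordinal) :
    ∃ n : ℕ, a = ω * (a / ω) + n := by
  obtain ⟨n, hn⟩ := Ordinal.lt_omega0.1 (Ordinal.mod_lt a omega0_ne_zero)
  exact ⟨n, by rw [← hn, Ordinal.div_add_mod]⟩

theorem Ordinal.omega0_mul_add_natCast_lt {β γ : Ordinal} (h : β < γ) (n : ℕ) :
    ω * β + n < ω * γ :=
  calc ω * β + n < ω * β + ω := by gcongr; exact natCast_lt_omega0 n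
    _ = ω * (β + 1) := (mul_add_one _ _).symm
    _ ≤ ω * γ := by gcongr; exact Order.add_one_le_iff.2 h

theorem Ordinal.exists_lt_omega0_mul_add_natCast {a γ : Ordinal} (h : a < ω * γ) :
    ∃ β < γ, ∃ n : ℕ, a < ω * β + n := by
  obtain ⟨n, hn⟩ := a.exists_eq_omega0_mul_div_add_natCast
  refine ⟨a / ω, (lt_mul_iff_div_lt omega0_ne_zero).1 h, n + 1, ?_⟩
  conv_lhs => rw [hn]
  gcongr
  exact_mod_cast n.lt_succ_self

theorem omegaPart_eq (a : Ordinal) : omegaPart a = ω * (a / ω) := by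
  have hlimit : ∀ b : Ordinal, (b = 0 ∨ IsSuccLimit b) ↔ ω ∣ b := by
    intro b
    rw [← isSuccPrelimit_iff_omega0_dvd]
    refine ⟨fun h => h.elim (fun h0 => h0 ▸ isSuccPrelimit_bot) IsSuccLimit.isSuccPrelimit,
      fun h => ?_⟩
    rcases eq_or_ne b 0 with h0 | h0
    · exact .inl h0
    · exact .inr (isSuccLimit_iff_of_orderBot.2 ⟨h0, h⟩)
  refine le_antisymm (csSup_le ⟨0, .inl rfl, zero_le⟩ fun b ⟨hb, hba⟩ => ?_)
    (le_csSup ⟨a, fun b hb => hb.2⟩ ⟨(hlimit _).2 (dvd_mul_right ω _), mul_div_le a ω⟩)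
  obtain ⟨c, rfl⟩ := (hlimit b).1 hb
  gcongr
  exact (mul_le_iff_le_div omega0_ne_zero).1 hba

section Comparison

variable {X : Type u} {E F : ℕ → X → X → Prop}

structure EventuallyFiner (E F : ℕ → X → X → Prop) : Prop where
  le_zero : ∀ n x y, E n x y → F 0 x y
  exists_le : ∀ b, ∃ m, ∀ x y, E m x y → F b x y
  separating : ∀ x, ∃ n, ∀ y, F n x y → y = x

def IsTopCover (u : TreeNode X F) (s : TreeNode X E) : Prop :=
  s.1.2 ⊆ u.1.2 ∧ ∀ x, ¬ s.1.2 ⊆ classOf F (u.1.1 + 1) x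

theorem EventuallyFiner.exists_isTopCover (h : EventuallyFiner E F) (hE : IsAntitoneEquiv E)
    (hF : IsAntitoneEquiv F) (s : TreeNode X E) : ∃ u : TreeNode X F, IsTopCover u s := by
  classical
  obtain ⟨x, hx⟩ := (s.nontrivial hE).nonempty
  have hzero : s.1.2 ⊆ classOf F 0 x := by
    rw [s.set_eq_classOf hE hx]
    exact fun y => h.le_zero _ x y
  have hex : ∃ n, ¬ s.1.2 ⊆ classOf F n x := by
    obtain ⟨n, hn⟩ := h.separating x
    exact ⟨n, fun hsub => (s.nontrivial hE).not_subset_singleton fun y hy => hn y (hsub hy)⟩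
  have hpos : Nat.find hex ≠ 0 := fun h0 => Nat.find_spec hex (h0 ▸ hzero)
  set b := Nat.find hex - 1
  have hb : s.1.2 ⊆ classOf F b x := of_not_not (Nat.find_min hex (by omega))
  have hnext : ¬ s.1.2 ⊆ classOf F (b + 1) x := by
    rw [show b + 1 = Nat.find hex by omega]
    exact Nat.find_spec hex
  refine ⟨.ofClass b x ((s.nontrivial hE).mono hb), hb, fun x' hx' => ?_⟩
  exact hnext (hF.classOf_eq (hx' hx) ▸ hx')

section TopCover

variable {u v : TreeNode X F} {s t : TreeNode X E}

theorem IsTopCover.le_level (hF : IsAntitoneEquiv F) (hu : IsTopCover u s) {b : ℕ} {x : X}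
    (h : s.1.2 ⊆ classOf F b x) : b ≤ u.1.1 := by
  by_contra! hlt
  exact hu.2 x (h.trans (hF.classOf_subset hlt x))

theorem IsTopCover.le_level_of_le (hE : IsAntitoneEquiv E) (hF : IsAntitoneEquiv F)
    (hu : IsTopCover u s) {m b : ℕ} (hmb : ∀ x y, E m x y → F b x y) (hm : m ≤ s.1.1) :
    b ≤ u.1.1 := by
  obtain ⟨x, hx⟩ := (s.nontrivial hE).nonempty
  refine hu.le_level hF (x := x) ?_
  rw [s.set_eq_classOf hE hx]
  exact (hE.classOf_subset hm x).trans fun y => hmb x y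

theorem IsTopCover.eq_or_nodeLT (hE : IsAntitoneEquiv E) (hF : IsAntitoneEquiv F)
    (hu : IsTopCover u s) (hv : IsTopCover v t) (hst : nodeLT E s t) :
    v = u ∨ nodeLT F u v := by
  obtain ⟨x, hx⟩ := (t.nontrivial hE).nonempty
  have hu_eq := u.set_eq_classOf hF (hu.1 (hst.2 hx))
  have hv_eq := v.set_eq_classOf hF (hv.1 hx)
  have hle : u.1.1 ≤ v.1.1 := hv.le_level hF (hst.2.trans (hu_eq ▸ hu.1))
  rcases hle.eq_or_lt with heq | hlt
  · exact .inl (Subtype.ext (Prod.ext heq.symm (by rw [hv_eq, hu_eq, heq])))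
  · exact .inr ⟨hlt, by rw [hv_eq, hu_eq]; exact hF.classOf_subset hlt.le x⟩

theorem IsTopCover.rank_add_le (hE : IsAntitoneEquiv E) (hF : IsAntitoneEquiv F)
    (hwf : TreeWF X F) (hu : IsTopCover u s) (hv : IsTopCover v t) (hst : nodeLT E s t) :
    hwf.rank v + (v.1.1 - u.1.1 : ℕ) ≤ hwf.rank u := by
  rcases hu.eq_or_nodeLT hE hF hv hst with rfl | h
  · simp
  · exact hwf.rank_add_le_of_nodeLT hF h

end TopCover

theorem EventuallyFiner.treeWF (h : EventuallyFiner E F) (hE : IsAntitoneEquiv E)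
    (hF : IsAntitoneEquiv F) (hwf : TreeWF X F) : TreeWF X E := by
  choose Φ hΦ using h.exists_isTopCover hE hF
  choose M hM using h.exists_le
  -- Along an edge the top cover either climbs, so its rank drops, or stays put while the level
  -- grows, bounded by `M ((Φ s).1.1 + 1)`.
  refine Subrelation.wf (fun {t s} hst => ?_) (InvImage.wf
    (fun s => (hwf.rank (Φ s), M ((Φ s).1.1 + 1) - s.1.1))
    (Ordinal.lt_wf.prod_lex wellFounded_lt))
  rcases (hΦ s).eq_or_nodeLT hE hF (hΦ t) hst with heq | hlt
  · have hstall : t.1.1 < M ((Φ t).1.1 + 1) := lt_of_not_ge fun hle => by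
      have := (hΦ t).le_level_of_le hE hF (hM _) hle
      omega
    simp only [InvImage, heq] at hstall ⊢
    exact Prod.Lex.right _ (by have := hst.1; omega)
  · exact Prod.Lex.left _ _ (hwf.rank_lt hlt)

theorem EventuallyFiner.rank_lt_omega0_mul (h : EventuallyFiner E F) (hE : IsAntitoneEquiv E)
    (hF : IsAntitoneEquiv F) (hwf : TreeWF X F) (hwfE : TreeWF X E)
    {Φ : TreeNode X E → TreeNode X F} (hΦ : ∀ s, IsTopCover (Φ s) s) (s : TreeNode X E)
    {γ : Ordinal} (hγ : hwf.rank (Φ s) < ω * γ) : hwfE.rank s < ω * γ := by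
  induction s using hwfE.induction generalizing γ with
  | _ s ih =>
    obtain ⟨β, hβγ, j, hj⟩ := exists_lt_omega0_mul_add_natCast hγ
    obtain ⟨m, hm⟩ := h.exists_le ((Φ s).1.1 + j)
    -- From level `m` on, the top cover has climbed `j` levels, so its rank is below `ω * β`.
    refine (hwfE.rank_le_add_of_forall_le_level (K := m) s fun t hst hmt => ih t hst ?_).trans_lt
      (omega0_mul_add_natCast_lt hβγ _)
    have hlevel := (hΦ t).le_level_of_le hE hF hm hmt
    refine lt_of_add_lt_add_right (a := (j : Ordinal)) ?_
    calc hwf.rank (Φ t) + j ≤ hwf.rank (Φ t) + ((Φ t).1.1 - (Φ s).1.1 : ℕ) := by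
          gcongr; omega
      _ ≤ hwf.rank (Φ s) := (hΦ s).rank_add_le hE hF hwf (hΦ t) hst
      _ < ω * β + j := hj

theorem EventuallyFiner.treeRho_le_omega0_mul (h : EventuallyFiner E F)
    (hE : IsAntitoneEquiv E) (hF : IsAntitoneEquiv F) (hwf : TreeWF X F) {γ : Ordinal}
    (hγ : treeRho X F ≤ ω * γ) : treeRho X E ≤ ω * γ := by
  choose Φ hΦ using h.exists_isTopCover hE hF
  have hwfE := h.treeWF hE hF hwf
  exact (treeRho_le_iff hwfE).2 fun s =>
    h.rank_lt_omega0_mul hE hF hwf hwfE hΦ s ((treeRho_le_iff hwf).1 hγ (Φ s))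

theorem EventuallyFiner.treeRho_div_omega0_le (h : EventuallyFiner E F)
    (hE : IsAntitoneEquiv E) (hF : IsAntitoneEquiv F) (hwf : TreeWF X F) :
    treeRho X E / ω ≤ treeRho X F / ω := by
  choose Φ hΦ using h.exists_isTopCover hE hF
  have hwfE := h.treeWF hE hF hwf
  set β := treeRho X F / ω
  obtain ⟨r, hr⟩ := (treeRho X F).exists_eq_omega0_mul_div_add_natCast
  obtain ⟨m, hm⟩ := h.exists_le r
  have hrank : ∀ s, hwfE.rank s ≤ ω * β + (m - s.1.1 : ℕ) := fun s =>
    hwfE.rank_le_add_of_forall_le_level s fun t _ hmt => by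
      refine h.rank_lt_omega0_mul hE hF hwf hwfE hΦ t
        (lt_of_add_lt_add_right (a := (r : Ordinal)) ?_)
      calc hwf.rank (Φ t) + r ≤ hwf.rank (Φ t) + (Φ t).1.1 := by
            gcongr; exact (hΦ t).le_level_of_le hE hF hm hmt
        _ < treeRho X F := hwf.rank_add_level_lt_treeRho hF _
        _ = ω * β + r := hr
  have hρ : treeRho X E ≤ ω * β + (m + 1 : ℕ) := (treeRho_le_iff hwfE).2 fun s =>
    (hrank s).trans_lt (by gcongr; omega)
  exact Order.lt_add_one_iff.1 ((lt_mul_iff_div_lt omega0_ne_zero).1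
    (hρ.trans_lt (omega0_mul_add_natCast_lt (Order.lt_add_one_iff.2 le_rfl) _)))

end Comparison

section Groups

variable {G H : Type u} [Group G] [Group H]

theorem subOrbit_isAntitoneEquiv {S : ℕ → Subgroup G} (hS : Antitone S) (Y : Type v)
    [MulAction G Y] : IsAntitoneEquiv (fun n => subOrbit (S n) Y) := by
  refine ⟨fun n => ⟨fun y => ⟨1, one_mem _, one_smul G y⟩, ?_, ?_⟩,
    fun m n hmn y z ⟨g, hg, hgz⟩ => ⟨g, hS hmn hg, hgz⟩⟩
  · rintro y z ⟨g, hg, rfl⟩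
    exact ⟨g⁻¹, inv_mem hg, inv_smul_smul g y⟩
  · rintro x y z ⟨g, hg, rfl⟩ ⟨g', hg', rfl⟩
    exact ⟨g' * g, mul_mem hg' hg, mul_smul g' g x⟩

theorem preservesClasses_subOrbit_map (φ : G →* H) {Y Z : Type v} [MulAction G Y]
    [MulAction H Z] {f : Y → Z} (hf : ∀ g y, f (g • y) = φ g • f y)
    (S : ℕ → Subgroup G) :
    PreservesClasses f (fun n => subOrbit (S n) Y) (fun n => subOrbit ((S n).map φ) Z) := by
  intro n y
  ext z
  constructor
  · rintro ⟨_, ⟨g, hg, rfl⟩, rfl⟩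
    exact ⟨φ g, Subgroup.mem_map_of_mem φ hg, (hf g y).symm⟩
  · rintro ⟨_, ⟨g, hg, rfl⟩, rfl⟩
    exact ⟨g • y, ⟨g, hg, rfl⟩, hf g y⟩

variable [TopologicalSpace G]

theorem Dgnb.seq_antitone (𝒢 : Dgnb G) : Antitone 𝒢.seq :=
  antitone_nat_of_succ_le 𝒢.antitone

theorem IsCLI.exists_tendsto (hcli : IsCLI G) (𝒢 : Dgnb G) {x : ℕ → G}
    (hx : ∀ i, (x i)⁻¹ * x (i + 1) ∈ 𝒢.seq i) : ∃ L, Tendsto x atTop (𝓝 L) := by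
  have hmem : ∀ i j, i ≤ j → (x i)⁻¹ * x j ∈ 𝒢.seq i := by
    intro i j hij
    induction j, hij using Nat.le_induction with
    | base => simp
    | succ j hij ih => simpa [mul_assoc] using mul_mem ih (𝒢.seq_antitone hij (hx j))
  obtain ⟨m, hm, hcomplete, hinv⟩ := hcli
  subst hm
  refine cauchySeq_tendsto_of_complete (Metric.cauchySeq_iff'.2 fun ε hε => ?_)
  obtain ⟨N, hN⟩ := 𝒢.basis _ (Metric.ball_mem_nhds 1 hε)
  refine ⟨N, fun n hn => ?_⟩
  calc dist (x n) (x N) = dist (x N * ((x N)⁻¹ * x n)) (x N * 1) := by simp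
    _ = dist ((x N)⁻¹ * x n) 1 := hinv _ _ _
    _ < ε := hN (hmem N n hn)

theorem IsCLI.exists_seq_le_stabilizer [IsTopologicalGroup G] (hcli : IsCLI G) (𝒢 : Dgnb G)
    {Y : Type v} [MulAction G Y] (hY : ∀ y : Y, IsOpen (MulAction.stabilizer G y : Set G))
    {z : ℕ → Y} (hz : ∀ i, subOrbit (𝒢.seq i) Y (z i) (z (i + 1))) :
    ∃ i, 𝒢.seq i ≤ MulAction.stabilizer G (z i) := by
  choose g hg hgz using hz
  -- `x i = (g 0)⁻¹ * ⋯ * (g (i - 1))⁻¹` converges, and `z i = (x i)⁻¹ • z 0`.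
  let x : ℕ → G := fun n => Nat.rec 1 (fun i xi => xi * (g i)⁻¹) n
  have hx : ∀ i, (x i)⁻¹ • z 0 = z i := by
    intro i
    induction i with
    | zero => exact (congrArg (· • z 0) inv_one).trans (one_smul G _)
    | succ i ih =>
      change (x i * (g i)⁻¹)⁻¹ • z 0 = z (i + 1)
      rw [mul_inv_rev, inv_inv, mul_smul, ih, hgz]
  obtain ⟨L, hL⟩ := hcli.exists_tendsto 𝒢 (x := x) fun i => by
    simpa [x] using inv_mem (hg i)
  obtain ⟨N, hN⟩ := 𝒢.basis _ ((hY (L⁻¹ • z 0)).mem_nhds (one_mem _))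
  have hlim : Tendsto (fun i => (x i)⁻¹ * L) atTop (𝓝 1) := by
    simpa using hL.inv.mul_const L
  obtain ⟨i, hiN, hNi⟩ :=
    ((hlim.eventually ((𝒢.isOpen N).mem_nhds (one_mem _))).and (eventually_ge_atTop N)).exists
  have hzi : z i = L⁻¹ • z 0 := by
    rw [← hx i, ← MulAction.mem_stabilizer_iff.1 (hN hiN), smul_smul, mul_assoc,
      mul_inv_cancel, mul_one]
  exact ⟨i, fun a ha => hzi ▸ hN (𝒢.seq_antitone hNi ha)⟩

theorem IsCLI.treeWF [IsTopologicalGroup G] (hcli : IsCLI G) (𝒢 : Dgnb G) {Y : Type v}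
    [MulAction G Y] (hY : ∀ y : Y, IsOpen (MulAction.stabilizer G y : Set G)) :
    TreeWF Y (dgnbRel 𝒢 Y) := by
  have hE : IsAntitoneEquiv (dgnbRel 𝒢 Y) := subOrbit_isAntitoneEquiv 𝒢.seq_antitone Y
  refine wellFounded_iff_isEmpty_descending_chain.2 ⟨fun ⟨c, hc⟩ => ?_⟩
  choose z hz using fun i => ((c i).nontrivial hE).nonempty
  have hlevel : ∀ i, i ≤ (c i).1.1 := (strictMono_nat_of_lt_succ fun i => (hc i).1).id_le
  have hchain : ∀ i, subOrbit (𝒢.seq i) Y (z i) (z (i + 1)) := fun i => by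
    have : z (i + 1) ∈ classOf _ (c i).1.1 (z i) :=
      (c i).set_eq_classOf hE (hz i) ▸ (hc i).2 (hz (i + 1))
    exact hE.antitone (hlevel i) _ _ this
  obtain ⟨i, hi⟩ := hcli.exists_seq_le_stabilizer 𝒢 hY hchain
  apply ((c i).nontrivial hE).not_subset_singleton
  rw [(c i).set_eq_classOf hE (hz i)]
  rintro _ ⟨g, hg, rfl⟩
  exact hi (𝒢.seq_antitone (hlevel i) hg)

theorem isOpen_stabilizer_sigma {ι : Type*} {Y : ι → Type*} [∀ i, MulAction G (Y i)]
    (h : ∀ i (y : Y i), IsOpen (MulAction.stabilizer G y : Set G)) (y : Σ i, Y i) :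
    IsOpen (MulAction.stabilizer G y : Set G) := by
  obtain ⟨i, y⟩ := y
  convert h i y using 1
  ext g
  simp [MulAction.mem_stabilizer_iff, Sigma.smul_mk]

theorem isOpen_stabilizer_quotient [IsTopologicalGroup G] {K : Subgroup G}
    (hK : IsOpen (K : Set G)) (y : G ⧸ K) : IsOpen (MulAction.stabilizer G y : Set G) :=
  haveI := QuotientGroup.discreteTopology hK
  stabilizer_isOpen G y

theorem rhoDgnb_eq (𝒢 : Dgnb G) :
    rhoDgnb 𝒢 = treeRho (Σ k, G ⧸ 𝒢.seq k) (dgnbRel 𝒢 (Σ k, G ⧸ 𝒢.seq k)) := by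
  unfold rhoDgnb
  congr 1
  ext n ⟨k, y⟩ q
  simp only [dgnbRel, subOrbit, Sigma.smul_mk, eq_comm]

theorem IsNonArch.nonempty_dgnb [FirstCountableTopology G] (hna : IsNonArch G) :
    Nonempty (Dgnb G) := by
  obtain ⟨B, hB⟩ := (𝓝 (1 : G)).exists_antitone_basis
  choose K hK hKB using fun n => hna (B n) (hB.mem n)
  refine ⟨⟨fun n => ⨅ i ∈ Finset.range n, K i, fun n => ?_, fun n => ?_, by simp,
    fun U hU => ?_⟩⟩
  · simp only [Subgroup.coe_iInf]
    exact (Finset.range n).finite_toSet.isOpen_biInter fun i _ => hK i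
  · exact biInf_mono fun i hi => Finset.mem_range.2 (Nat.lt_succ_of_lt (Finset.mem_range.1 hi))
  · obtain ⟨n, -, hn⟩ := hB.toHasBasis.mem_iff.1 hU
    exact ⟨n + 1, fun g hg => hn (hKB n ((iInf₂_le n (by simp) : _ ≤ K n) hg))⟩

end Groups

section Map

variable {G H : Type u} [Group G] [TopologicalSpace G] [Group H] [TopologicalSpace H]
  {π : G →* H}

theorem treeSimulates_dgnb_map (hπ : Function.Surjective π) (hπc : Continuous π)
    (𝒢 : Dgnb G) (𝒬 : Dgnb H) : TreeSimulates (dgnbRel 𝒢 (Σ k, G ⧸ 𝒢.seq k))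
      (fun n => subOrbit ((𝒢.seq n).map π) (Σ k, H ⧸ 𝒬.seq k)) := by
  choose j hj using fun k => 𝒢.basis _ (((𝒬.isOpen k).preimage hπc).mem_nhds
    (by simp : (1 : G) ∈ π ⁻¹' 𝒬.seq k))
  let ι : (Σ k, G ⧸ 𝒢.seq (j k)) → Σ k, G ⧸ 𝒢.seq k := fun p => ⟨j p.1, p.2⟩
  let f : (Σ k, G ⧸ 𝒢.seq (j k)) → Σ k, H ⧸ 𝒬.seq k := fun p =>
    ⟨p.1, Quotient.map' π (fun a b hab => QuotientGroup.leftRel_apply.2 (by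
      simpa using hj p.1 (QuotientGroup.leftRel_apply.1 hab))) p.2⟩
  have hι : PreservesClasses ι (dgnbRel 𝒢 _) (dgnbRel 𝒢 _) := by
    have := preservesClasses_subOrbit_map (MonoidHom.id G) (f := ι) (fun g p => rfl) 𝒢.seq
    simp only [Subgroup.map_id] at this
    exact this
  have hinj : ∀ n p, (classOf (dgnbRel 𝒢 _) n p).InjOn ι := by
    rintro n ⟨k, y⟩ _ ⟨g, -, rfl⟩ _ ⟨g', -, rfl⟩ h
    simpa [ι, Sigma.smul_mk] using h
  have hf : PreservesClasses f (dgnbRel 𝒢 _) (fun n => subOrbit ((𝒢.seq n).map π) _) := by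
    refine preservesClasses_subOrbit_map π (fun g ⟨k, y⟩ => ?_) 𝒢.seq
    induction y using QuotientGroup.induction_on
    simp [f, Sigma.smul_mk, MulAction.Quotient.smul_mk]
  have hsurj : Function.Surjective f := by
    rintro ⟨k, y⟩
    obtain ⟨b, rfl⟩ := QuotientGroup.mk_surjective y
    obtain ⟨a, rfl⟩ := hπ b
    exact ⟨⟨k, a⟩, rfl⟩
  exact (treeSimulates_of_surjective (subOrbit_isAntitoneEquiv
      (fun m n hmn => Subgroup.map_mono (𝒢.seq_antitone hmn)) _)
    (subOrbit_isAntitoneEquiv 𝒢.seq_antitone _) hf hsurj).trans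
    (treeSimulates_of_injOn (subOrbit_isAntitoneEquiv 𝒢.seq_antitone _) hι hinj)

theorem eventuallyFiner_dgnb_map [IsTopologicalGroup H] (hπ : Function.Surjective π)
    (hπc : Continuous π) (hπo : IsOpenMap π) (𝒢 : Dgnb G) (𝒬 : Dgnb H) :
    EventuallyFiner (dgnbRel 𝒬 (Σ k, H ⧸ 𝒬.seq k))
      (fun n => subOrbit ((𝒢.seq n).map π) (Σ k, H ⧸ 𝒬.seq k)) where
  le_zero := by
    rintro n x _ ⟨h, -, rfl⟩
    refine ⟨h, ?_, rfl⟩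
    rw [𝒢.zero_eq_top, Subgroup.map_top_of_surjective π hπ]
    trivial
  exists_le b := by
    obtain ⟨m, hm⟩ :=
      𝒬.basis _ ((hπo _ (𝒢.isOpen b)).mem_nhds ⟨1, one_mem _, map_one π⟩)
    exact ⟨m, fun x y ⟨h, hh, hy⟩ => ⟨h, hm hh, hy⟩⟩
  separating x := by
    have hx := isOpen_stabilizer_sigma (fun k => isOpen_stabilizer_quotient (𝒬.isOpen k)) x
    obtain ⟨n, hn⟩ := 𝒢.basis _ ((hx.preimage hπc).mem_nhds (by simp))
    refine ⟨n, ?_⟩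
    rintro _ ⟨_, ⟨g, hg, rfl⟩, rfl⟩
    exact hn hg

theorem IsCLI.treeWF_and_treeRho_le_rhoDgnb [IsTopologicalGroup G] (hcli : IsCLI G)
    (hπ : Function.Surjective π) (hπc : Continuous π) (𝒢 : Dgnb G) (𝒬 : Dgnb H) :
    TreeWF _ (fun n => subOrbit ((𝒢.seq n).map π) (Σ k, H ⧸ 𝒬.seq k)) ∧
      treeRho _ (fun n => subOrbit ((𝒢.seq n).map π) (Σ k, H ⧸ 𝒬.seq k)) ≤ rhoDgnb 𝒢 := by
  have hwf := hcli.treeWF 𝒢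
    (isOpen_stabilizer_sigma fun k => isOpen_stabilizer_quotient (𝒢.isOpen k))
  have hsim := treeSimulates_dgnb_map hπ hπc 𝒢 𝒬
  exact ⟨hsim.treeWF hwf, rhoDgnb_eq 𝒢 ▸ hsim.treeRho_le hwf⟩

theorem rhoDgnb_le_omega0_mul_of_map [IsTopologicalGroup G] [IsTopologicalGroup H]
    (hcli : IsCLI G) (hπ : Function.Surjective π) (hπc : Continuous π) (hπo : IsOpenMap π)
    (𝒢 : Dgnb G) (𝒬 : Dgnb H) {γ : Ordinal} (hγ : rhoDgnb 𝒢 ≤ ω * γ) :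
    rhoDgnb 𝒬 ≤ ω * γ := by
  obtain ⟨hwf, hle⟩ := hcli.treeWF_and_treeRho_le_rhoDgnb hπ hπc 𝒢 𝒬
  rw [rhoDgnb_eq]
  exact (eventuallyFiner_dgnb_map hπ hπc hπo 𝒢 𝒬).treeRho_le_omega0_mul
    (subOrbit_isAntitoneEquiv 𝒬.seq_antitone _)
    (subOrbit_isAntitoneEquiv (fun m n hmn => Subgroup.map_mono (𝒢.seq_antitone hmn)) _) hwf
    (hle.trans hγ)

theorem rhoDgnb_div_omega0_le_of_map [IsTopologicalGroup G] [IsTopologicalGroup H]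
    (hcli : IsCLI G) (hπ : Function.Surjective π) (hπc : Continuous π) (hπo : IsOpenMap π)
    (𝒢 : Dgnb G) (𝒬 : Dgnb H) : rhoDgnb 𝒬 / ω ≤ rhoDgnb 𝒢 / ω := by
  obtain ⟨hwf, hle⟩ := hcli.treeWF_and_treeRho_le_rhoDgnb hπ hπc 𝒢 𝒬
  rw [rhoDgnb_eq]
  exact ((eventuallyFiner_dgnb_map hπ hπc hπo 𝒢 𝒬).treeRho_div_omega0_le
    (subOrbit_isAntitoneEquiv 𝒬.seq_antitone _)
    (subOrbit_isAntitoneEquiv (fun m n hmn => Subgroup.map_mono (𝒢.seq_antitone hmn)) _)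
    hwf).trans (div_le_left hle _)

end Map

theorem statement_3_general (G : Type) [Group G] [TopologicalSpace G] [IsTopologicalGroup G]
    [PolishSpace G] (hna : IsNonArch G) (hcli : IsCLI G)
    (N : Subgroup G) [N.Normal]
    (α : Ordinal) :
    (IsAlphaCLI G α → IsAlphaCLI (G ⧸ N) α) ∧
    (IsLAlphaCLI G α → IsLAlphaCLI (G ⧸ N) α) ∧
    (∀ (𝒢 : Dgnb G) (𝒬 : Dgnb (G ⧸ N)), omegaPart (rhoDgnb 𝒬) ≤ omegaPart (rhoDgnb 𝒢)) := by
  have hπ := QuotientGroup.mk'_surjective N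
  have hπc : Continuous (QuotientGroup.mk' N) := QuotientGroup.continuous_mk
  have hπo : IsOpenMap (QuotientGroup.mk' N) := QuotientGroup.isOpenMap_coe
  have homega (𝒢 : Dgnb G) (𝒬 : Dgnb (G ⧸ N)) :
      omegaPart (rhoDgnb 𝒬) ≤ omegaPart (rhoDgnb 𝒢) := by
    rw [omegaPart_eq, omegaPart_eq]
    gcongr
    exact rhoDgnb_div_omega0_le_of_map hcli hπ hπc hπo 𝒢 𝒬
  obtain ⟨𝒢₀⟩ := hna.nonempty_dgnb
  exact ⟨fun hG 𝒬 => rhoDgnb_le_omega0_mul_of_map hcli hπ hπc hπo 𝒢₀ 𝒬 (hG 𝒢₀),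
    fun hG 𝒬 => (homega 𝒢₀ 𝒬).trans (hG 𝒢₀), homega⟩

theorem statement_3 (G : Type) [Group G] [TopologicalSpace G] [IsTopologicalGroup G]
    [PolishSpace G] (hna : IsNonArch G) (hcli : IsCLI G)
    (N : Subgroup G) [N.Normal] (hN : IsClosed (N : Set G))
    (α : Ordinal) (hα : α < (Cardinal.aleph 1).ord) :
    (IsAlphaCLI G α → IsAlphaCLI (G ⧸ N) α) ∧
    (IsLAlphaCLI G α → IsLAlphaCLI (G ⧸ N) α) ∧
    (∀ (𝒢 : Dgnb G) (𝒬 : Dgnb (G ⧸ N)), omegaPart (rhoDgnb 𝒬) ≤ omegaPart (rhoDgnb 𝒢)) :=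
  statement_3_general G hna hcli N α

end
end

section
/- Let G be a non-archimedean CLI Polish group, X a countable discrete Polish G-space, and 𝒢 = (G_n) ∈ dgnb(G). Then ρ(T_𝒢^X) ≤ ρ(𝒢). -/
noncomputable section

/-!
If `G` is CLI, every tree `T_𝒢^Y` of a `G`-set `Y` with open stabilizers is well-founded: along an
infinite branch `(n_i, C_i)` with `y_i ∈ C_i` one finds `a_i ∈ G` with `a_i • y_0 = y_i` and
`a_j a_i⁻¹ ∈ G_{n_i}` for `i ≤ j`. For a complete left-invariant metric `(a_i⁻¹)` is then Cauchy,
and the limit `g` of `(a_i)` puts `g • y_0` into every `C_i`; as the stabilizer of `g • y_0` is open,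
it contains some `G_{n_i}`, which makes `C_i` a singleton.

Every `x ∈ X` is fixed by some `G_k`, the stabilizer of the point `G_k` of `X(𝒢)`. Whenever
`stab y ≤ stab x`, the `G_n`-orbit of `h • x` is non-singleton only if that of `h • y` is, so sending
one to the other simulates `T_𝒢^X` inside `T_𝒢^{X(𝒢)}`, and ranks can only grow.
-/

universe u v

open MulAction Filter Topology

section Simulation

variable {S T : Type u} {ltS : S → S → Prop} {ltT : T → T → Prop} {R : S → T → Prop}

theorem rhoRel_eq_iSup (h : WellFounded (Function.swap ltT)) :
    rhoRel ltT = ⨆ t, Order.succ (h.apply t).rank :=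
  dif_pos h

theorem acc_of_simulation (hstep : ∀ s s' t, R s t → ltS s s' → ∃ t', ltT t t' ∧ R s' t')
    {t : T} (ht : Acc (Function.swap ltT) t) : ∀ s, R s t → Acc (Function.swap ltS) s := by
  induction ht with
  | intro t _ ih =>
    refine fun s hst => Acc.intro s fun s' hss' => ?_
    obtain ⟨t', htt', hst'⟩ := hstep s s' t hst hss'
    exact ih t' htt' s' hst'

theorem rank_le_of_simulation (hS : WellFounded (Function.swap ltS))
    (hT : WellFounded (Function.swap ltT))
    (hstep : ∀ s s' t, R s t → ltS s s' → ∃ t', ltT t t' ∧ R s' t') (t : T) :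
    ∀ s, R s t → (hS.apply s).rank ≤ (hT.apply t).rank := by
  induction t using hT.induction with
  | _ t ih =>
    intro s hst
    rw [(hS.apply s).rank_eq]
    refine Ordinal.iSup_le fun ⟨s', hss'⟩ => ?_
    obtain ⟨t', htt', hst'⟩ := hstep s s' t hst hss'
    exact (Order.succ_le_succ (ih t' htt' s' hst')).trans
      (Order.succ_le_of_lt ((hT.apply t).rank_lt_of_rel htt'))

theorem rhoRel_le_of_simulation (hT : WellFounded (Function.swap ltT)) (hR : ∀ s, ∃ t, R s t)
    (hstep : ∀ s s' t, R s t → ltS s s' → ∃ t', ltT t t' ∧ R s' t') :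
    rhoRel ltS ≤ rhoRel ltT := by
  have hS : WellFounded (Function.swap ltS) :=
    ⟨fun s => (hR s).elim fun t hst => acc_of_simulation hstep (hT.apply t) s hst⟩
  rw [rhoRel_eq_iSup hS, rhoRel_eq_iSup hT]
  refine Ordinal.iSup_le fun s => ?_
  obtain ⟨t, hst⟩ := hR s
  exact (Order.succ_le_succ (rank_le_of_simulation hS hT hstep t s hst)).trans
    (Ordinal.le_iSup _ t)

end Simulation

section Orbits

variable {G : Type*} [Group G] {X Y : Type*} [MulAction G X] [MulAction G Y] {H K : Subgroup G}

theorem subOrbit_refl (x : X) : subOrbit H X x x :=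
  ⟨1, H.one_mem, one_smul G x⟩

theorem subOrbit_mono (hHK : H ≤ K) {x y : X} (h : subOrbit H X x y) : subOrbit K X x y :=
  let ⟨g, hg, hgx⟩ := h
  ⟨g, hHK hg, hgx⟩

theorem setOf_subOrbit_eq_of_subOrbit {x y : X} (h : subOrbit H X x y) :
    {z | subOrbit H X y z} = {z | subOrbit H X x z} := by
  obtain ⟨g, hg, rfl⟩ := h
  ext z
  constructor
  · rintro ⟨g', hg', rfl⟩
    exact ⟨g' * g, mul_mem hg' hg, mul_smul g' g x⟩
  · rintro ⟨g', hg', rfl⟩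
    exact ⟨g' * g⁻¹, mul_mem hg' (inv_mem hg), by rw [mul_smul, inv_smul_smul]⟩

theorem setOf_subOrbit_subset_of_le (hHK : H ≤ K) {x y : X} (h : subOrbit K X x y) :
    {z | subOrbit H X y z} ⊆ {z | subOrbit K X x z} := by
  rw [← setOf_subOrbit_eq_of_subOrbit h]
  exact fun z => subOrbit_mono hHK

theorem setOf_subOrbit_eq_singleton_iff {x : X} :
    {y | subOrbit H X x y} = {x} ↔ H ≤ stabilizer G x := by
  constructor
  · intro h g hg
    have hgx : g • x ∈ {y | subOrbit H X x y} := ⟨g, hg, rfl⟩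
    rwa [h] at hgx
  · intro h
    ext y
    constructor
    · rintro ⟨g, hg, rfl⟩
      exact h hg
    · rintro rfl
      exact subOrbit_refl _

theorem stabilizer_smul_le_stabilizer_smul {x : X} {y : Y}
    (h : stabilizer G y ≤ stabilizer G x) (g : G) :
    stabilizer G (g • y) ≤ stabilizer G (g • x) := by
  rw [stabilizer_smul_eq_stabilizer_map_conj, stabilizer_smul_eq_stabilizer_map_conj]
  exact Subgroup.map_mono h

theorem Sigma.stabilizer_mk {ι : Type*} {α : ι → Type*} [∀ i, MulAction G (α i)] (i : ι)
    (b : α i) : stabilizer G (⟨i, b⟩ : Σ i, α i) = stabilizer G b := by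
  ext g
  simp [mem_stabilizer_iff]

end Orbits

namespace Dgnb

variable {G : Type u} [Group G] [TopologicalSpace G] (𝒢 : Dgnb G)

theorem seq_antitone_s11 : Antitone 𝒢.seq :=
  antitone_nat_of_succ_le 𝒢.antitone

theorem exists_seq_le {K : Subgroup G} (hK : IsOpen (K : Set G)) : ∃ n, 𝒢.seq n ≤ K :=
  𝒢.basis _ (hK.mem_nhds K.one_mem)

section Nodes

variable {X Y : Type v} [MulAction G X] [MulAction G Y]

theorem not_seq_le_stabilizer_of_mem (s : TreeNode X (dgnbRel 𝒢 X)) {x : X}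
    (hx : x ∈ s.1.2) : ¬ 𝒢.seq s.1.1 ≤ stabilizer G x := by
  obtain ⟨x₀, hs, hne⟩ := s.2
  intro hle
  rw [hs] at hx
  have hsx : s.1.2 = {x} := by
    rw [hs]
    exact (setOf_subOrbit_eq_of_subOrbit hx).symm.trans (setOf_subOrbit_eq_singleton_iff.2 hle)
  have hx₀ : x₀ ∈ s.1.2 := by rw [hs]; exact subOrbit_refl x₀
  rw [hsx, Set.mem_singleton_iff] at hx₀
  exact hne (hx₀ ▸ hsx)

def orbitNode (n : ℕ) (x : X) (hx : ¬ 𝒢.seq n ≤ stabilizer G x) :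
    TreeNode X (dgnbRel 𝒢 X) :=
  ⟨(n, {y | dgnbRel 𝒢 X n x y}), x, rfl, mt setOf_subOrbit_eq_singleton_iff.1 hx⟩

def StabCover (s : TreeNode X (dgnbRel 𝒢 X)) (t : TreeNode Y (dgnbRel 𝒢 Y)) : Prop :=
  ∃ x y, stabilizer G y ≤ stabilizer G x ∧ s.1.2 = {z | dgnbRel 𝒢 X s.1.1 x z} ∧
    t.1 = (s.1.1, {z | dgnbRel 𝒢 Y s.1.1 y z})

theorem exists_stabCover (hXY : ∀ x : X, ∃ y : Y, stabilizer G y ≤ stabilizer G x)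
    (s : TreeNode X (dgnbRel 𝒢 X)) : ∃ t : TreeNode Y (dgnbRel 𝒢 Y), StabCover 𝒢 s t := by
  obtain ⟨x, hs, -⟩ := s.2
  obtain ⟨y, hyx⟩ := hXY x
  have hx : x ∈ s.1.2 := by rw [hs]; exact subOrbit_refl x
  exact ⟨orbitNode 𝒢 s.1.1 y fun hle => 𝒢.not_seq_le_stabilizer_of_mem s hx (hle.trans hyx),
    x, y, hyx, hs, rfl⟩

theorem StabCover.exists_nodeLT {s s' : TreeNode X (dgnbRel 𝒢 X)}
    {t : TreeNode Y (dgnbRel 𝒢 Y)} (hst : StabCover 𝒢 s t) (hss' : nodeLT _ s s') :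
    ∃ t', nodeLT _ t t' ∧ StabCover 𝒢 s' t' := by
  obtain ⟨x, y, hyx, hs, ht⟩ := hst
  obtain ⟨hlt, hsub⟩ := hss'
  obtain ⟨x', hs', -⟩ := s'.2
  have hx' : x' ∈ s'.1.2 := by rw [hs']; exact subOrbit_refl x'
  have hxx' : subOrbit (𝒢.seq s.1.1) X x x' := by
    have := hsub hx'
    rwa [hs] at this
  obtain ⟨h, hh, rfl⟩ := hxx'
  have hyx' := stabilizer_smul_le_stabilizer_smul hyx h
  refine ⟨orbitNode 𝒢 s'.1.1 (h • y)
      fun hle => 𝒢.not_seq_le_stabilizer_of_mem s' hx' (hle.trans hyx'),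
    ⟨?_, ?_⟩, h • x, h • y, hyx', hs', rfl⟩
  · rw [ht]
    exact hlt
  · rw [ht]
    exact setOf_subOrbit_subset_of_le (𝒢.seq_antitone_s11 hlt.le) ⟨h, hh, rfl⟩

theorem treeRho_le_of_stabilizer_le (hY : TreeWF Y (dgnbRel 𝒢 Y))
    (hXY : ∀ x : X, ∃ y : Y, stabilizer G y ≤ stabilizer G x) :
    treeRho X (dgnbRel 𝒢 X) ≤ treeRho Y (dgnbRel 𝒢 Y) :=
  rhoRel_le_of_simulation hY (𝒢.exists_stabCover hXY) fun _ _ _ hst hss' =>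
    hst.exists_nodeLT 𝒢 hss'

end Nodes

end Dgnb

theorem IsCLI.exists_tendsto_s11 {G : Type*} [Group G] [TopologicalSpace G] [IsTopologicalGroup G]
    (hcli : IsCLI G) {a : ℕ → G} (ha : ∀ U ∈ 𝓝 (1 : G), ∃ N, ∀ j ≥ N, a j * (a N)⁻¹ ∈ U) :
    ∃ g, Tendsto a atTop (𝓝 g) := by
  obtain ⟨m, hmt, hmc, hml⟩ := hcli
  have hcauchy : @CauchySeq G ℕ m.toUniformSpace _ fun i => (a i)⁻¹ := by
    refine (@Metric.cauchySeq_iff' G ℕ m.toPseudoMetricSpace _ _ _).2 fun ε hε => ?_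
    have hball : IsOpen {z : G | m.dist z 1 < ε} :=
      hmt ▸ @Metric.isOpen_ball G m.toPseudoMetricSpace 1 ε
    obtain ⟨N, hN⟩ := ha _ (hball.mem_nhds (by simpa using hε))
    refine ⟨N, fun j hj => ?_⟩
    calc m.dist (a j)⁻¹ (a N)⁻¹ = m.dist (a j * (a j)⁻¹) (a j * (a N)⁻¹) := (hml _ _ _).symm
      _ = m.dist (a j * (a N)⁻¹) 1 := by rw [mul_inv_cancel, m.dist_comm]
      _ < ε := hN j hj
  obtain ⟨g, hg⟩ := @cauchySeq_tendsto_of_complete G ℕ m.toUniformSpace _ hmc _ hcauchy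
  rw [hmt] at hg
  exact ⟨g⁻¹, by simpa using hg.inv⟩

theorem Dgnb.treeWF_of_isCLI {G : Type u} [Group G] [TopologicalSpace G] [IsTopologicalGroup G]
    (hcli : IsCLI G) (𝒢 : Dgnb G) {Y : Type v} [MulAction G Y]
    (hY : ∀ y : Y, IsOpen (stabilizer G y : Set G)) : TreeWF Y (dgnbRel 𝒢 Y) := by
  refine wellFounded_iff_isEmpty_descending_chain.2 ⟨fun ⟨f, hf⟩ => ?_⟩
  set n : ℕ → ℕ := fun i => (f i).1.1
  have hn : StrictMono n := strictMono_nat_of_lt_succ fun i => (hf i).1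
  choose y hy _ using fun i => (f i).2
  have hnext : ∀ i, subOrbit (𝒢.seq (n i)) Y (y i) (y (i + 1)) := fun i => by
    have := (hf i).2 (by rw [hy (i + 1)]; exact subOrbit_refl (y (i + 1)))
    rwa [hy i] at this
  choose g hg hgy using hnext
  let a : ℕ → G := fun i => Nat.rec 1 (fun i b => g i * b) i
  have ha_smul : ∀ i, a i • y 0 = y i := by
    intro i
    induction i with
    | zero => exact one_smul G _
    | succ i ih => rw [← hgy i, ← ih]; exact mul_smul _ _ _
  have ha_mem : ∀ i j, i ≤ j → a j * (a i)⁻¹ ∈ 𝒢.seq (n i) := by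
    intro i j hij
    induction j, hij using Nat.le_induction with
    | base => simp
    | succ j hij ih =>
      have hgj : g j ∈ 𝒢.seq (n i) := 𝒢.seq_antitone_s11 (hn.monotone hij) (hg j)
      rw [show a (j + 1) = g j * a j from rfl, mul_assoc]
      exact mul_mem hgj ih
  obtain ⟨c, hc⟩ := hcli.exists_tendsto_s11 (a := a) fun U hU => by
    obtain ⟨N, hN⟩ := 𝒢.basis U hU
    exact ⟨N, fun j hj => hN (𝒢.seq_antitone_s11 hn.le_apply (ha_mem N j hj))⟩
  have hc_mem : ∀ i, c * (a i)⁻¹ ∈ 𝒢.seq (n i) := fun i =>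
    ((𝒢.seq (n i)).isClosed_of_isOpen (𝒢.isOpen _)).mem_of_tendsto (hc.mul_const _)
      (eventually_atTop.2 ⟨i, ha_mem i⟩)
  obtain ⟨N, hN⟩ := 𝒢.exists_seq_le (hY (c • y 0))
  refine 𝒢.not_seq_le_stabilizer_of_mem (f N) (x := c • y 0) ?_
    ((𝒢.seq_antitone_s11 hn.le_apply).trans hN)
  rw [hy N]
  exact ⟨c * (a N)⁻¹, hc_mem N, by rw [← ha_smul N, mul_smul, inv_smul_smul]⟩

theorem rhoDgnb_eq_treeRho {G : Type u} [Group G] [TopologicalSpace G] (𝒢 : Dgnb G) :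
    rhoDgnb 𝒢 = treeRho (Σ k, G ⧸ 𝒢.seq k) (dgnbRel 𝒢 _) := by
  unfold rhoDgnb
  congr
  funext n p q
  exact propext ⟨fun ⟨g, hg, h⟩ => ⟨g, hg, h.symm⟩, fun ⟨g, hg, h⟩ => ⟨g, hg, h.symm⟩⟩

theorem statement_11_general (G : Type) [Group G] [TopologicalSpace G] [IsTopologicalGroup G]
    (hcli : IsCLI G)
    (X : Type) [TopologicalSpace X] [DiscreteTopology X]
    [MulAction G X] [ContinuousSMul G X] (𝒢 : Dgnb G) :
    treeRho X (dgnbRel 𝒢 X) ≤ rhoDgnb 𝒢 := by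
  have hX : ∀ x : X, ∃ y : Σ k, G ⧸ 𝒢.seq k, stabilizer G y ≤ stabilizer G x := fun x =>
    let ⟨k, hk⟩ := 𝒢.exists_seq_le (stabilizer_isOpen G x)
    ⟨⟨k, (1 : G)⟩, by rwa [Sigma.stabilizer_mk, stabilizer_quotient]⟩
  have hY : ∀ y : Σ k, G ⧸ 𝒢.seq k, IsOpen (stabilizer G y : Set G) := fun ⟨k, q⟩ => by
    have := QuotientGroup.discreteTopology (𝒢.isOpen k)
    rw [Sigma.stabilizer_mk]
    exact stabilizer_isOpen G q
  rw [rhoDgnb_eq_treeRho]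
  exact 𝒢.treeRho_le_of_stabilizer_le (𝒢.treeWF_of_isCLI hcli hY) hX

theorem statement_11 (G : Type) [Group G] [TopologicalSpace G] [IsTopologicalGroup G]
    [PolishSpace G] (hna : IsNonArch G) (hcli : IsCLI G)
    (X : Type) [TopologicalSpace X] [DiscreteTopology X] [Countable X]
    [MulAction G X] [ContinuousSMul G X] (𝒢 : Dgnb G) :
    treeRho X (dgnbRel 𝒢 X) ≤ rhoDgnb 𝒢 :=
  statement_11_general G hcli X 𝒢
end
end
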